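/- Let k ≥ 1 and let B = {y ∈ ℝᵏ : ‖y‖ < 1} be the open unit ball. The map p : ℝ × B → S^{k+1} defined by p(t, y) = (√(1 − ‖y‖²) · cos t, y₁, …, y_k, √(1 − ‖y‖²) · sin t) is a covering map onto the subspace {x ∈ S^{k+1} : (x₁, x_{k+2}) ≠ (0,0)}, and its domain ℝ × B is simply connected; hence ℝ × B is the universal cover of the complement S^{k+1} ∖ S^{k−1} of the totally geodesic codimension-two subsphere S^{k−1} = {x ∈ S^{k+1} : x₁ = x_{k+2} = 0}. -/

import Mathlib

/-
Write a point of ℝ^{k+2} as (w, y) ∈ ℂ × ℝᵏ with w = x₁ + i x_{k+2}. Then S^{k+1} ∖ S^{k-1} is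
{‖w‖² + ‖y‖² = 1, w ≠ 0}, which (w, y) ↦ (w / ‖w‖, y) identifies with S¹ × B, the inverse being
(z, y) ↦ (√(1 - ‖y‖²) z, y). Through this homeomorphism p becomes exp × id : ℝ × B → S¹ × B, a
product of covering maps; and ℝ × B is convex, hence contractible.
-/

/-- The complement in `S^{k+1} ⊂ ℝ^{k+2}` of the totally geodesic codimension-two
subsphere `S^{k-1} = {x ∈ S^{k+1} : x₁ = x_{k+2} = 0}`, as a topological space. -/
abbrev SphereComplement (k : ℕ) : Type :=
  {x : EuclideanSpace ℝ (Fin (k + 2)) //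
    ‖x‖ = 1 ∧ (x 0, x (Fin.last (k + 1))) ≠ ((0 : ℝ), (0 : ℝ))}

open Set Metric

section CoveringMap

variable {E X E' X' : Type*} [TopologicalSpace E] [TopologicalSpace X] [TopologicalSpace E']
  [TopologicalSpace X'] {f : E → X} {g : E' → X'}

theorem IsEvenlyCovered.prodMap {I J : Type*} [TopologicalSpace I] [TopologicalSpace J]
    {x : X} {x' : X'} (hf : IsEvenlyCovered f x I) (hg : IsEvenlyCovered g x' J) :
    IsEvenlyCovered (Prod.map f g) (x, x') (I × J) := by
  obtain ⟨_, U, hxU, hU, hfU, H, hH⟩ := hf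
  obtain ⟨_, V, hxV, hV, hgV, K, hK⟩ := hg
  have hpre : Prod.map f g ⁻¹' U ×ˢ V = (f ⁻¹' U) ×ˢ (g ⁻¹' V) := preimage_prod_map_prod f g U V
  refine ⟨inferInstance, U ×ˢ V, ⟨hxU, hxV⟩, hU.prod hV, hpre ▸ hfU.prod hgV,
    (Homeomorph.setCongr hpre).trans <| (Homeomorph.Set.prod _ _).trans <|
      (H.prodCongr K).trans <| (Homeomorph.prodProdProdComm _ _ _ _).trans <|
        (Homeomorph.Set.prod U V).symm.prodCongr (Homeomorph.refl _), fun e => ?_⟩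
  exact Prod.ext (hH _) (hK _)

theorem IsCoveringMap.prodMap (hf : IsCoveringMap f) (hg : IsCoveringMap g) :
    IsCoveringMap (Prod.map f g) :=
  fun x => ((hf x.1).prodMap (hg x.2)).to_isEvenlyCovered_preimage

theorem Homeomorph.isCoveringMap (e : X ≃ₜ X') : IsCoveringMap e := fun _ =>
  IsEvenlyCovered.to_isEvenlyCovered_preimage (I := Unit) ⟨inferInstance, univ, trivial,
    isOpen_univ, isOpen_univ, (((Homeomorph.Set.univ X).trans e).trans
      (Homeomorph.Set.univ X').symm).trans (Homeomorph.prodPUnit _).symm, fun _ => rfl⟩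

end CoveringMap

section CircleBall

variable {F : Type*} [NormedAddCommGroup F]

variable (F) in
def unitSphereOffAxis : Set (ℂ × F) := {q | ‖q.1‖ ^ 2 + ‖q.2‖ ^ 2 = 1 ∧ q.1 ≠ 0}

theorem one_sub_norm_sq_pos_of_mem_ball {y : F} (hy : y ∈ ball (0 : F) 1) : 0 < 1 - ‖y‖ ^ 2 := by
  have := mem_ball_zero_iff.mp hy
  nlinarith [norm_nonneg y]

noncomputable def circleProdBallHomeomorph : Circle × ball (0 : F) 1 ≃ₜ unitSphereOffAxis F where
  toFun q := ⟨(√(1 - ‖(q.2 : F)‖ ^ 2) * q.1, q.2), by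
    have hpos := one_sub_norm_sq_pos_of_mem_ball q.2.2
    refine ⟨?_, mul_ne_zero (by exact_mod_cast (Real.sqrt_pos.2 hpos).ne') (Circle.coe_ne_zero _)⟩
    rw [norm_mul, Circle.norm_coe, mul_one, Complex.norm_real, Real.norm_eq_abs, sq_abs,
      Real.sq_sqrt hpos.le]
    ring⟩
  invFun q := (⟨q.1.1 / ‖q.1.1‖, mem_sphere_zero_iff_norm.2 (by simp [q.2.2])⟩, ⟨q.1.2, by
      have hsum := q.2.1
      have hw : 0 < ‖q.1.1‖ := norm_pos_iff.2 q.2.2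
      rw [mem_ball_zero_iff]
      nlinarith [norm_nonneg q.1.2]⟩)
  left_inv := by
    rintro ⟨z, y⟩
    have hpos := Real.sqrt_pos.2 (one_sub_norm_sq_pos_of_mem_ball y.2)
    have hnorm : ‖(√(1 - ‖(y : F)‖ ^ 2) : ℂ) * z‖ = √(1 - ‖(y : F)‖ ^ 2) := by
      rw [norm_mul, Circle.norm_coe, mul_one, Complex.norm_real, Real.norm_of_nonneg hpos.le]
    refine Prod.ext (Circle.coe_injective ?_) rfl
    have hne : (√(1 - ‖(y : F)‖ ^ 2) : ℂ) ≠ 0 := by exact_mod_cast hpos.ne'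
    simp only [hnorm]
    field_simp
  right_inv := by
    rintro ⟨⟨w, y⟩, hsum, hw⟩
    have hsqrt : √(1 - ‖y‖ ^ 2) = ‖w‖ := by
      rw [← hsum, add_sub_cancel_right, Real.sqrt_sq (norm_nonneg w)]
    refine Subtype.ext (Prod.ext ?_ rfl)
    have hne : (‖w‖ : ℂ) ≠ 0 := by exact_mod_cast (norm_pos_iff.2 hw).ne'
    simp only [hsqrt]
    field_simp
  continuous_toFun := by fun_prop
  continuous_invFun := by
    refine .prodMk (.subtype_mk ?_ _) (.subtype_mk (by fun_prop) _)
    exact Continuous.div (by fun_prop) (by fun_prop) fun q => by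
      exact_mod_cast (norm_pos_iff.2 q.2.2).ne'

end CircleBall

namespace EuclideanSpace

noncomputable def splitEnds (k : ℕ) :
    EuclideanSpace ℝ (Fin (k + 2)) ≃L[ℝ] ℂ × EuclideanSpace ℝ (Fin k) :=
  LinearEquiv.toContinuousLinearEquiv
    { toFun x := (⟨x 0, x (Fin.last _)⟩, WithLp.toLp 2 fun i => x i.castSucc.succ)
      invFun q := WithLp.toLp 2 (Fin.cons q.1.re (Fin.snoc q.2.ofLp q.1.im))
      map_add' x y := by ext <;> simp [Complex.ext_iff]
      map_smul' c x := by ext <;> simp [Complex.ext_iff]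
      left_inv x := by
        ext j
        refine Fin.cases ?_ (fun i => Fin.lastCases ?_ (fun i => ?_) i) j <;> simp
      right_inv q := by
        ext <;> simp [← Fin.succ_last] }

@[simp] theorem splitEnds_symm_apply_zero {k : ℕ} (q : ℂ × EuclideanSpace ℝ (Fin k)) :
    (splitEnds k).symm q 0 = q.1.re := rfl

@[simp] theorem splitEnds_symm_apply_castSucc_succ {k : ℕ} (q : ℂ × EuclideanSpace ℝ (Fin k))
    (i : Fin k) : (splitEnds k).symm q i.castSucc.succ = q.2 i := by
  simp [splitEnds]

@[simp] theorem splitEnds_symm_apply_last {k : ℕ} (q : ℂ × EuclideanSpace ℝ (Fin k)) :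
    (splitEnds k).symm q (Fin.last (k + 1)) = q.1.im := by
  simp [splitEnds, ← Fin.succ_last]

theorem norm_sq_eq_splitEnds {k : ℕ} (x : EuclideanSpace ℝ (Fin (k + 2))) :
    ‖x‖ ^ 2 = ‖(splitEnds k x).1‖ ^ 2 + ‖(splitEnds k x).2‖ ^ 2 := by
  rw [EuclideanSpace.norm_sq_eq, EuclideanSpace.norm_sq_eq, Fin.sum_univ_succ,
    Fin.sum_univ_castSucc, Fin.succ_last, Complex.sq_norm, Complex.normSq_apply]
  simp [splitEnds]
  ring

end EuclideanSpace

noncomputable def sphereComplementHomeomorph (k : ℕ) :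
    SphereComplement k ≃ₜ unitSphereOffAxis (EuclideanSpace ℝ (Fin k)) :=
  (EuclideanSpace.splitEnds k).toHomeomorph.subtype fun x => by
    rw [unitSphereOffAxis, mem_ofPred_eq, ContinuousLinearEquiv.coe_toHomeomorph,
      ← EuclideanSpace.norm_sq_eq_splitEnds, pow_eq_one_iff_of_nonneg (norm_nonneg x) two_ne_zero]
    simp [EuclideanSpace.splitEnds, Complex.ext_iff]

theorem stmt_9 (k : ℕ) :
    ∃ p : ℝ × (Metric.ball (0 : EuclideanSpace ℝ (Fin k)) 1) → SphereComplement k,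
      (∀ (t : ℝ) (y : Metric.ball (0 : EuclideanSpace ℝ (Fin k)) 1),
        ((p (t, y) : EuclideanSpace ℝ (Fin (k + 2))) 0 =
            Real.sqrt (1 - ‖(y : EuclideanSpace ℝ (Fin k))‖ ^ 2) * Real.cos t) ∧
        (∀ i : Fin k, (p (t, y) : EuclideanSpace ℝ (Fin (k + 2))) i.castSucc.succ =
            (y : EuclideanSpace ℝ (Fin k)) i) ∧
        ((p (t, y) : EuclideanSpace ℝ (Fin (k + 2))) (Fin.last (k + 1)) =
            Real.sqrt (1 - ‖(y : EuclideanSpace ℝ (Fin k))‖ ^ 2) * Real.sin t)) ∧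
      Function.Surjective p ∧ IsCoveringMap p ∧
      SimplyConnectedSpace (ℝ × (Metric.ball (0 : EuclideanSpace ℝ (Fin k)) 1)) := by
  let e := circleProdBallHomeomorph.trans (sphereComplementHomeomorph k).symm
  have hcover : IsCoveringMap (Prod.map Circle.exp id :
      ℝ × ball (0 : EuclideanSpace ℝ (Fin k)) 1 → _) :=
    Circle.isCoveringMap_exp.prodMap (Homeomorph.refl _).isCoveringMap
  refine ⟨e ∘ Prod.map Circle.exp id, fun t y => ?_, ?_, hcover.homeomorph_comp e, ?_⟩
  · simp [e, sphereComplementHomeomorph, circleProdBallHomeomorph, Complex.exp_ofReal_mul_I_re,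
      Complex.exp_ofReal_mul_I_im]
  · exact e.surjective.comp (Circle.exp_surjective.prodMap Function.surjective_id)
  · have : ContractibleSpace (ball (0 : EuclideanSpace ℝ (Fin k)) 1) :=
      (convex_ball _ _).contractibleSpace ⟨0, mem_ball_self one_pos⟩
    infer_instance
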